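/- Suppose Δ_H has a bounded inverse on L²_⊥(Ω). Let ρ₀, ρ₁ ∈ L²(Ω) integrate to 1 over Ω and be bounded below on Ω by c > 0. Set f = Δ_H⁻¹(ρ₁ - ρ₀), ρ(t,·) = ρ₀ + t(ρ₁-ρ₀), and uᵢ(t,x) = Xᵢf(x)/ρ(t,x). Then ρ(t,·) is a distributional solution of the continuity equation ∂ₜρ + ∇·(Σᵢ uᵢ gᵢ ρ) = 0 on (0,1) × ℝ^d (extending ρ by 0 outside Ω), i.e., ∫₀¹∫ (∂ₜφ + Σᵢ uᵢ gᵢ·∇φ) ρ dx dt = 0 for all φ ∈ C_c^∞((0,1)×ℝ^d). -/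

import Mathlib

open MeasureTheory

/-- The formal adjoint `Xᵢ* φ = -Σⱼ ∂ⱼ(gᵢʲ φ)`. -/
noncomputable def Xstar (d : ℕ) (gi : (Fin d → ℝ) → (Fin d → ℝ)) (φ : (Fin d → ℝ) → ℝ) :
    (Fin d → ℝ) → ℝ :=
  fun x => -∑ j, fderiv ℝ (fun y => gi y j * φ y) x (Pi.single j 1)

/-- Weak derivative along `gᵢ` on `Ω`. -/
def IsWeakDeriv (d : ℕ) (Ω : Set (Fin d → ℝ)) (gi : (Fin d → ℝ) → (Fin d → ℝ))
    (u v : (Fin d → ℝ) → ℝ) : Prop :=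
  ∀ φ : (Fin d → ℝ) → ℝ, ContDiff ℝ (⊤ : ℕ∞) φ → HasCompactSupport φ → tsupport φ ⊆ Ω →
    ∫ x in Ω, v x * φ x = ∫ x in Ω, u x * Xstar d gi φ x

open scoped ENNReal in
lemma l2_mul_integrable {α : Type*} [MeasurableSpace α] {μ : Measure α} {f g : α → ℝ}
    (hf : MemLp f 2 μ) (hg : MemLp g 2 μ) : Integrable (fun x => f x * g x) μ := by
  have h : (1 : ℝ≥0∞)/1 = 1/2 + 1/2 := by
    rw [one_div_one]; exact (ENNReal.add_halves 1).symm
  haveI : ENNReal.HolderTriple 2 2 1 := ⟨by simpa [one_div] using h.symm⟩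
  have := hg.smul (r := 1) hf
  rw [memLp_one_iff_integrable] at this
  exact this

lemma isWeakDeriv_smooth {d : ℕ} {Ω : Set (Fin d → ℝ)} (hΩo : IsOpen Ω)
    {gi : (Fin d → ℝ) → (Fin d → ℝ)} (hgi : ContDiffOn ℝ 1 gi (closure Ω))
    {w : (Fin d → ℝ) → ℝ} (hw : ContDiff ℝ (⊤ : ℕ∞) w) :
    IsWeakDeriv d Ω gi w (fun x => ∑ j, gi x j * fderiv ℝ w x (Pi.single j 1)) := by
  intro ψ hψ hψc hψs
  set q : Fin d → (Fin d → ℝ) → ℝ := fun j y => gi y j * ψ y with hqdef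
  have hzero : ∀ x : Fin d → ℝ, x ∉ tsupport ψ → ∀ j, q j =ᶠ[nhds x] fun _ => (0:ℝ) := by
    intro x hx j
    filter_upwards [(isClosed_tsupport ψ).isOpen_compl.mem_nhds hx] with y hy
    simp [hqdef, image_eq_zero_of_notMem_tsupport hy]
  have hqC1 : ∀ j, ContDiffOn ℝ 1 (q j) Ω := by
    intro j
    exact (((ContinuousLinearMap.proj (R := ℝ) (φ := fun _ : Fin d => ℝ) j).contDiff.comp_contDiffOn
      hgi).mono subset_closure).mul ((hψ.of_le (by simp)).contDiffOn)
  have hqdiff : ∀ j x, DifferentiableAt ℝ (q j) x := by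
    intro j x
    by_cases hx : x ∈ Ω
    · exact ((hqC1 j).differentiableOn one_ne_zero).differentiableAt (hΩo.mem_nhds hx)
    · have hxs : x ∉ tsupport ψ := fun h => hx (hψs h)
      exact (differentiableAt_const (0:ℝ)).congr_of_eventuallyEq (hzero x hxs j)
  have hqfz : ∀ j x, x ∉ tsupport ψ → fderiv ℝ (q j) x = 0 := by
    intro j x hx
    rw [(hzero x hx j).fderiv_eq]
    exact fderiv_const_apply 0
  have hqfc : ∀ j, Continuous (fun x => fderiv ℝ (q j) x) := by
    intro j
    rw [continuous_iff_continuousAt]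
    intro x
    by_cases hx : x ∈ Ω
    · exact ((hqC1 j).continuousOn_fderiv_of_isOpen hΩo le_rfl).continuousAt (hΩo.mem_nhds hx)
    · have hxs : x ∉ tsupport ψ := fun h => hx (hψs h)
      apply ContinuousAt.congr continuousAt_const
      filter_upwards [(isClosed_tsupport ψ).isOpen_compl.mem_nhds hxs] with y hy
      exact (hqfz j y hy).symm
  have hqcont : ∀ j, Continuous (q j) := fun j =>
    continuous_iff_continuousAt.2 fun x => (hqdiff j x).continuousAt
  have hqsupp : ∀ j, HasCompactSupport (q j) := by
    intro j
    apply HasCompactSupport.intro hψc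
    intro x hx
    simp [hqdef, image_eq_zero_of_notMem_tsupport hx]
  have hwcont : Continuous w := hw.continuous
  have hwd : Differentiable ℝ w := hw.differentiable (by simp)
  have hwfc : ∀ v : Fin d → ℝ, Continuous fun x => fderiv ℝ w x v := fun v =>
    (ContinuousLinearMap.apply ℝ ℝ v).continuous.comp (hw.continuous_fderiv (by simp))
  have hibp : ∀ j, ∫ x, w x * fderiv ℝ (q j) x (Pi.single j 1)
      = -∫ x, fderiv ℝ w x (Pi.single j 1) * q j x := by
    intro j
    apply integral_mul_fderiv_eq_neg_fderiv_mul_of_integrable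
    · apply Continuous.integrable_of_hasCompactSupport ((hwfc _).mul (hqcont j))
      exact (hqsupp j).mul_left
    · apply Continuous.integrable_of_hasCompactSupport
        (hwcont.mul ((ContinuousLinearMap.apply ℝ ℝ (Pi.single j 1)).continuous.comp (hqfc j)))
      apply HasCompactSupport.mul_left
      apply HasCompactSupport.intro hψc
      intro x hx
      simp [hqfz j x hx]
    · exact Continuous.integrable_of_hasCompactSupport (hwcont.mul (hqcont j))
        (hqsupp j).mul_left
    · exact fun x _ => hwd x
    · exact fun x _ => hqdiff _ x
  -- support facts for converting set integrals to full integrals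
  have hL : ∫ x in Ω, (∑ j, gi x j * fderiv ℝ w x (Pi.single j 1)) * ψ x
      = ∫ x, ∑ j, fderiv ℝ w x (Pi.single j 1) * q j x := by
    rw [setIntegral_eq_integral_of_forall_compl_eq_zero]
    · congr 1
      funext x
      rw [Finset.sum_mul]
      exact Finset.sum_congr rfl fun j _ => by simp [hqdef]; ring
    · intro x hx
      have hxs : x ∉ tsupport ψ := fun h => hx (hψs h)
      simp [image_eq_zero_of_notMem_tsupport hxs]
  have hR : ∫ x in Ω, w x * Xstar d gi ψ x
      = ∫ x, ∑ j, -(w x * fderiv ℝ (q j) x (Pi.single j 1)) := by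
    rw [setIntegral_eq_integral_of_forall_compl_eq_zero]
    · congr 1
      funext x
      simp only [Xstar, hqdef, mul_neg, Finset.mul_sum, neg_eq_iff_eq_neg, ← Finset.sum_neg_distrib]
    · intro x hx
      have hxs : x ∉ tsupport ψ := fun h => hx (hψs h)
      simp only [Xstar]
      have : ∀ j, fderiv ℝ (fun y => gi y j * ψ y) x = 0 := fun j => hqfz j x hxs
      simp [this]
  rw [hL, hR]
  rw [integral_finset_sum, integral_finset_sum]
  · apply Finset.sum_congr rfl
    intro j _
    rw [integral_neg, hibp j, neg_neg]
  · intro j _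
    apply Integrable.neg
    exact Continuous.integrable_of_hasCompactSupport
      (hwcont.mul ((ContinuousLinearMap.apply ℝ ℝ (Pi.single j 1)).continuous.comp (hqfc j)))
      (HasCompactSupport.mul_left (HasCompactSupport.intro hψc fun x hx => by simp [hqfz j x hx]))
  · intro j _
    exact Continuous.integrable_of_hasCompactSupport ((hwfc _).mul (hqcont j))
      (hqsupp j).mul_left

/-- Suppose `Δ_H` has a bounded inverse on `L²_⊥(Ω)`; let `ρ₀, ρ₁ ∈ L²(Ω)`
integrate to 1 and be bounded below by `c > 0`, let `f = Δ_H⁻¹(ρ₁ - ρ₀)` (i.e. `f ∈ WH¹(Ω)`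
with `σ(f,φ) = ⟨ρ₁-ρ₀, φ⟩` for all `φ ∈ WH¹(Ω)`), `ρ(t,·) = ρ₀ + t(ρ₁-ρ₀)` extended by `0`
outside `Ω`, and `uᵢ(t,x) = Xᵢf(x)/ρ(t,x)`. Then `ρ` is a distributional solution of the
continuity equation `∂ₜρ + ∇·(Σᵢ uᵢ gᵢ ρ) = 0` on `(0,1) × ℝ^d`. -/
theorem stmt7 (d m : ℕ) (Ω : Set (Fin d → ℝ)) (hΩo : IsOpen Ω)
    (hΩb : Bornology.IsBounded Ω)
    (g : Fin m → (Fin d → ℝ) → (Fin d → ℝ))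
    (hg : ∀ i, ContDiffOn ℝ 2 (g i) (closure Ω))
    (c : ℝ) (hc : 0 < c)
    (ρ0 ρ1 : (Fin d → ℝ) → ℝ)
    (hρ02 : MemLp ρ0 2 (volume.restrict Ω)) (hρ12 : MemLp ρ1 2 (volume.restrict Ω))
    (hρ0int : ∫ x in Ω, ρ0 x = 1) (hρ1int : ∫ x in Ω, ρ1 x = 1)
    (hlb : ∀ᵐ x ∂(volume.restrict Ω), c ≤ ρ0 x ∧ c ≤ ρ1 x)
    (f : (Fin d → ℝ) → ℝ) (Xf : Fin m → (Fin d → ℝ) → ℝ)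
    (hf2 : MemLp f 2 (volume.restrict Ω))
    (hXf2 : ∀ i, MemLp (Xf i) 2 (volume.restrict Ω))
    (hweak : ∀ i, IsWeakDeriv d Ω (g i) f (Xf i))
    -- f = Δ_H⁻¹ (ρ₁ - ρ₀):  σ(f,φ) = ⟨ρ₁ - ρ₀, φ⟩ for all φ ∈ WH¹(Ω)
    (hΔ : ∀ (φ : (Fin d → ℝ) → ℝ) (Xφ : Fin m → (Fin d → ℝ) → ℝ),
      MemLp φ 2 (volume.restrict Ω) →
      (∀ i, MemLp (Xφ i) 2 (volume.restrict Ω) ∧ IsWeakDeriv d Ω (g i) φ (Xφ i)) →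
      ∑ i, ∫ x in Ω, Xf i x * Xφ i x = ∫ x in Ω, (ρ1 x - ρ0 x) * φ x)
    -- ρ(t,·) = ρ₀ + t(ρ₁ - ρ₀) extended by zero outside Ω
    (ρ : ℝ → (Fin d → ℝ) → ℝ)
    (hρ : ∀ t x, ρ t x = Set.indicator Ω (fun z => ρ0 z + t * (ρ1 z - ρ0 z)) x)
    -- the feedback controls uᵢ(t,x) = Xᵢf(x)/ρ(t,x)
    (u : ℝ → (Fin d → ℝ) → Fin m → ℝ)
    (hu : ∀ t x i, u t x i = Xf i x / ρ t x) :
    ∀ φ : ℝ × (Fin d → ℝ) → ℝ, ContDiff ℝ (⊤ : ℕ∞) φ → HasCompactSupport φ →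
      tsupport φ ⊆ Set.Ioo (0:ℝ) 1 ×ˢ Set.univ →
      ∫ t in (0:ℝ)..1, ∫ x, (fderiv ℝ φ (t, x) (1, 0) +
          ∑ i, u t x i * ∑ j, g i x j * fderiv ℝ φ (t, x) (0, Pi.single j 1)) * ρ t x
        = 0 := by
  intro φ hφ hφc hφs
  have hΩm : MeasurableSet Ω := hΩo.measurableSet
  haveI hfin : IsFiniteMeasure (volume.restrict Ω) := by
    constructor
    rw [Measure.restrict_apply_univ]
    exact hΩb.measure_lt_top
  obtain ⟨Cφ, hCφ⟩ := hφc.exists_bound_of_continuous hφ.continuous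
  have hfd : Continuous (fderiv ℝ φ) := hφ.continuous_fderiv (by simp)
  obtain ⟨Cd, hCd⟩ := (hφc.fderiv (𝕜 := ℝ)).exists_bound_of_continuous hfd
  have hCd0 : 0 ≤ Cd := le_trans (norm_nonneg _) (hCd (0, 0))
  have hCφ0 : 0 ≤ Cφ := le_trans (norm_nonneg _) (hCφ (0, 0))
  -- bound on g
  have hKcl : IsCompact (closure Ω) := Metric.isCompact_of_isClosed_isBounded isClosed_closure hΩb.closure
  have hgc : ∀ i, ContinuousOn (g i) (closure Ω) := fun i => (hg i).continuousOn
  have hgbd : ∀ i, ∃ C, ∀ x ∈ closure Ω, ‖g i x‖ ≤ C := fun i =>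
    hKcl.exists_bound_of_continuousOn (hgc i)
  choose Cg hCg using hgbd
  -- smoothness of slices
  have hΦsm : ∀ t : ℝ, ContDiff ℝ (⊤ : ℕ∞) (fun x => φ (t, x)) := fun t =>
    hφ.comp (contDiff_const.prodMk contDiff_id)
  have hfderivΦ : ∀ (t : ℝ) (x : Fin d → ℝ) (v : Fin d → ℝ),
      fderiv ℝ (fun y => φ (t, y)) x v = fderiv ℝ φ (t, x) (0, v) := by
    intro t x v
    have hm : HasFDerivAt (fun y : Fin d → ℝ => ((t : ℝ), y))
        ((0 : (Fin d → ℝ) →L[ℝ] ℝ).prod (ContinuousLinearMap.id ℝ (Fin d → ℝ))) x :=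
      (hasFDerivAt_const t x).prodMk (hasFDerivAt_id x)
    have h2 : HasFDerivAt (fun y => φ (t, y))
        ((fderiv ℝ φ (t, x)).comp
          ((0 : (Fin d → ℝ) →L[ℝ] ℝ).prod (ContinuousLinearMap.id ℝ (Fin d → ℝ)))) x :=
      ((hφ.differentiable (by simp) (t, x)).hasFDerivAt).comp x hm
    rw [h2.fderiv]
    simp
  have hDt : ∀ (t : ℝ) (x : Fin d → ℝ),
      HasDerivAt (fun s => φ (s, x)) (fderiv ℝ φ (t, x) (1, 0)) t := by
    intro t x
    have hm : HasDerivAt (fun s : ℝ => (s, x)) ((1:ℝ), (0 : Fin d → ℝ)) t :=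
      (hasDerivAt_id t).prodMk (hasDerivAt_const t x)
    exact ((hφ.differentiable (by simp) (t, x)).hasFDerivAt).comp_hasDerivAt t hm
  -- norm bounds on directional derivatives
  have hdirbd : ∀ (p : ℝ × (Fin d → ℝ)) (v : ℝ × (Fin d → ℝ)),
      ‖v‖ ≤ 1 → ‖fderiv ℝ φ p v‖ ≤ Cd := by
    intro p v hv
    calc ‖fderiv ℝ φ p v‖ ≤ ‖fderiv ℝ φ p‖ * ‖v‖ := (fderiv ℝ φ p).le_opNorm v
    _ ≤ Cd * 1 := by
        apply mul_le_mul (hCd p) hv (norm_nonneg _) hCd0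
    _ = Cd := mul_one Cd
  have hsingle : ∀ j : Fin d, ‖(Pi.single j (1:ℝ) : Fin d → ℝ)‖ ≤ 1 := by
    intro j
    apply pi_norm_le_iff_of_nonneg zero_le_one |>.2
    intro k
    rcases eq_or_ne k j with rfl | hk
    · simp
    · simp [Pi.single_apply, hk]
  have hv01 : ∀ j : Fin d, ‖((0 : ℝ), (Pi.single j (1:ℝ) : Fin d → ℝ))‖ ≤ 1 := by
    intro j
    rw [Prod.norm_def]
    simp only [norm_zero]
    exact max_le zero_le_one (hsingle j)
  have hv10 : ‖((1 : ℝ), (0 : Fin d → ℝ))‖ ≤ 1 := by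
    rw [Prod.norm_def]
    simp
  -- the key application of hΔ to the time slices
  have memS : ∀ (t : ℝ) (i : Fin m),
      MemLp (fun x => ∑ j, g i x j * fderiv ℝ φ (t, x) (0, Pi.single j 1)) 2
        (volume.restrict Ω) := by
    intro t i
    refine MemLp.of_bound ?_ (∑ _j : Fin d, Cg i * Cd) ?_
    · apply Finset.aestronglyMeasurable_fun_sum
      intro j _
      apply AEStronglyMeasurable.mul
      · exact ((continuous_apply j).comp_continuousOn
          ((hgc i).mono subset_closure)).aestronglyMeasurable hΩm
      · exact ((ContinuousLinearMap.apply ℝ ℝ ((0:ℝ), (Pi.single j (1:ℝ) : Fin d → ℝ))).continuous.comp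
          (hfd.comp (Continuous.prodMk_right t))).aestronglyMeasurable
    · filter_upwards [ae_restrict_mem hΩm] with x hx
      calc ‖∑ j, g i x j * fderiv ℝ φ (t, x) (0, Pi.single j 1)‖
          ≤ ∑ j, ‖g i x j * fderiv ℝ φ (t, x) (0, Pi.single j 1)‖ := norm_sum_le _ _
        _ ≤ ∑ _j : Fin d, Cg i * Cd := by
            apply Finset.sum_le_sum
            intro j _
            rw [norm_mul]
            apply mul_le_mul ?_ (hdirbd (t, x) _ (hv01 j)) (norm_nonneg _) ?_
            · exact le_trans (norm_le_pi_norm (g i x) j) (hCg i x (subset_closure hx))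
            · exact le_trans (norm_nonneg _) (hCg i x (subset_closure hx))
  have claim1 : ∀ t : ℝ,
      ∑ i, ∫ x in Ω, Xf i x * (∑ j, g i x j * fderiv ℝ φ (t, x) (0, Pi.single j 1))
      = ∫ x in Ω, (ρ1 x - ρ0 x) * φ (t, x) := by
    intro t
    apply hΔ (fun x => φ (t, x))
      (fun i x => ∑ j, g i x j * fderiv ℝ φ (t, x) (0, Pi.single j 1))
    · apply MemLp.of_bound ((hΦsm t).continuous.aestronglyMeasurable) Cφ
      exact Filter.Eventually.of_forall fun x => hCφ (t, x)
    · intro i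
      refine ⟨memS t i, ?_⟩
      have hw := isWeakDeriv_smooth hΩo ((hg i).of_le one_le_two) (hΦsm t)
      have heq : (fun x => ∑ j, g i x j * fderiv ℝ (fun y => φ (t, y)) x (Pi.single j 1))
          = fun x => ∑ j, g i x j * fderiv ℝ φ (t, x) (0, Pi.single j 1) := by
        funext x
        exact Finset.sum_congr rfl fun j _ => by rw [hfderivΦ]
      rw [heq] at hw
      exact hw
  -- integrability on Ω of the pieces, for each t
  have hρ0i : Integrable ρ0 (volume.restrict Ω) := hρ02.integrable one_le_two
  have hρ1i : Integrable ρ1 (volume.restrict Ω) := hρ12.integrable one_le_two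
  have hI1 : ∀ t : ℝ, Integrable
      (fun x => fderiv ℝ φ (t, x) (1, 0) * (ρ0 x + t * (ρ1 x - ρ0 x)))
      (volume.restrict Ω) := by
    intro t
    apply Integrable.bdd_mul
    · exact hρ0i.add (((hρ1i.sub hρ0i)).const_mul t)
    · exact Continuous.aestronglyMeasurable
        ((ContinuousLinearMap.apply ℝ ℝ ((1:ℝ), (0 : Fin d → ℝ))).continuous.comp
          (hfd.comp (Continuous.prodMk_right t)))
    · exact Filter.Eventually.of_forall fun x => hdirbd (t, x) _ hv10
  have hI2 : ∀ (t : ℝ) (i : Fin m), Integrable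
      (fun x => Xf i x * (∑ j, g i x j * fderiv ℝ φ (t, x) (0, Pi.single j 1)))
      (volume.restrict Ω) := fun t i => l2_mul_integrable (hXf2 i) (memS t i)
  have hI3 : ∀ t : ℝ, Integrable (fun x => φ (t, x) * (ρ1 x - ρ0 x)) (volume.restrict Ω) := by
    intro t
    apply Integrable.bdd_mul (hρ1i.sub hρ0i)
      ((hΦsm t).continuous.aestronglyMeasurable)
    exact Filter.Eventually.of_forall fun x => hCφ (t, x)
  -- step C: rewrite the inner integral for t ∈ Ioc 0 1
  have key : ∀ t ∈ Set.Ioc (0:ℝ) 1,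
      (∫ x, (fderiv ℝ φ (t, x) (1, 0) +
          ∑ i, u t x i * ∑ j, g i x j * fderiv ℝ φ (t, x) (0, Pi.single j 1)) * ρ t x)
      = ∫ x in Ω, (fderiv ℝ φ (t, x) (1, 0) * (ρ0 x + t * (ρ1 x - ρ0 x))
          + φ (t, x) * (ρ1 x - ρ0 x)) := by
    intro t ht
    calc (∫ x, (fderiv ℝ φ (t, x) (1, 0) +
          ∑ i, u t x i * ∑ j, g i x j * fderiv ℝ φ (t, x) (0, Pi.single j 1)) * ρ t x)
        = ∫ x, Set.indicator Ω (fun y => (fderiv ℝ φ (t, y) (1, 0) +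
          ∑ i, u t y i * ∑ j, g i y j * fderiv ℝ φ (t, y) (0, Pi.single j 1)) *
            (ρ0 y + t * (ρ1 y - ρ0 y))) x := by
          congr 1
          funext x
          rw [hρ]
          by_cases hx : x ∈ Ω
          · rw [Set.indicator_of_mem hx, Set.indicator_of_mem hx]
          · rw [Set.indicator_of_notMem hx, Set.indicator_of_notMem hx, mul_zero]
      _ = ∫ x in Ω, (fderiv ℝ φ (t, x) (1, 0) +
          ∑ i, u t x i * ∑ j, g i x j * fderiv ℝ φ (t, x) (0, Pi.single j 1)) *
            (ρ0 x + t * (ρ1 x - ρ0 x)) := integral_indicator hΩm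
      _ = ∫ x in Ω, (fderiv ℝ φ (t, x) (1, 0) * (ρ0 x + t * (ρ1 x - ρ0 x))
            + ∑ i, Xf i x * (∑ j, g i x j * fderiv ℝ φ (t, x) (0, Pi.single j 1))) := by
          apply integral_congr_ae
          filter_upwards [hlb, ae_restrict_mem hΩm] with x hx hxΩ
          have hFc : c ≤ ρ0 x + t * (ρ1 x - ρ0 x) := by nlinarith [hx.1, hx.2, ht.1.le, ht.2]
          have hFne : ρ0 x + t * (ρ1 x - ρ0 x) ≠ 0 := (lt_of_lt_of_le hc hFc).ne'
          have hρt : ρ t x = ρ0 x + t * (ρ1 x - ρ0 x) := by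
            rw [hρ]; exact Set.indicator_of_mem hxΩ _
          rw [add_mul, Finset.sum_mul]
          congr 1
          apply Finset.sum_congr rfl
          intro i _
          rw [hu, hρt]
          field_simp
      _ = (∫ x in Ω, fderiv ℝ φ (t, x) (1, 0) * (ρ0 x + t * (ρ1 x - ρ0 x)))
            + ∑ i, ∫ x in Ω, Xf i x * (∑ j, g i x j * fderiv ℝ φ (t, x) (0, Pi.single j 1)) := by
          rw [integral_add (hI1 t) (integrable_finset_sum _ (fun i _ => hI2 t i)),
            integral_finset_sum _ (fun i _ => hI2 t i)]
      _ = (∫ x in Ω, fderiv ℝ φ (t, x) (1, 0) * (ρ0 x + t * (ρ1 x - ρ0 x)))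
            + ∫ x in Ω, φ (t, x) * (ρ1 x - ρ0 x) := by
          rw [claim1 t]
          congr 1
          exact integral_congr_ae (Filter.Eventually.of_forall fun x => mul_comm _ _)
      _ = _ := (integral_add (hI1 t) (hI3 t)).symm
  rw [intervalIntegral.integral_of_le zero_le_one]
  rw [setIntegral_congr_fun measurableSet_Ioc key]
  -- Fubini
  have hswap : ∫ t in Set.Ioc (0:ℝ) 1, ∫ x in Ω,
      (fderiv ℝ φ (t, x) (1, 0) * (ρ0 x + t * (ρ1 x - ρ0 x)) + φ (t, x) * (ρ1 x - ρ0 x))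
      = ∫ x in Ω, ∫ t in Set.Ioc (0:ℝ) 1,
      (fderiv ℝ φ (t, x) (1, 0) * (ρ0 x + t * (ρ1 x - ρ0 x)) + φ (t, x) * (ρ1 x - ρ0 x)) := by
    apply integral_integral_swap
    have huneq : (Function.uncurry fun (t : ℝ) (x : Fin d → ℝ) =>
        fderiv ℝ φ (t, x) (1, 0) * (ρ0 x + t * (ρ1 x - ρ0 x)) + φ (t, x) * (ρ1 x - ρ0 x))
        = fun p : ℝ × (Fin d → ℝ) =>
          fderiv ℝ φ p (1, 0) * (ρ0 p.2 + p.1 * (ρ1 p.2 - ρ0 p.2)) + φ p * (ρ1 p.2 - ρ0 p.2) :=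
      rfl
    rw [huneq]
    have h1 : Continuous fun p : ℝ × (Fin d → ℝ) => fderiv ℝ φ p ((1:ℝ), (0 : Fin d → ℝ)) :=
      (ContinuousLinearMap.apply ℝ ℝ ((1:ℝ), (0:Fin d → ℝ))).continuous.comp hfd
    have hρ0m : AEStronglyMeasurable (fun p : ℝ × (Fin d → ℝ) => ρ0 p.2)
        ((volume.restrict (Set.Ioc (0:ℝ) 1)).prod (volume.restrict Ω)) := hρ02.1.comp_snd
    have hρ1m : AEStronglyMeasurable (fun p : ℝ × (Fin d → ℝ) => ρ1 p.2)
        ((volume.restrict (Set.Ioc (0:ℝ) 1)).prod (volume.restrict Ω)) := hρ12.1.comp_snd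
    have hmeas : AEStronglyMeasurable (fun p : ℝ × (Fin d → ℝ) =>
        fderiv ℝ φ p (1, 0) * (ρ0 p.2 + p.1 * (ρ1 p.2 - ρ0 p.2)) + φ p * (ρ1 p.2 - ρ0 p.2))
        ((volume.restrict (Set.Ioc (0:ℝ) 1)).prod (volume.restrict Ω)) := by
      apply AEStronglyMeasurable.add
      · exact h1.aestronglyMeasurable.mul (hρ0m.add
          (continuous_fst.aestronglyMeasurable.mul (hρ1m.sub hρ0m)))
      · exact hφ.continuous.aestronglyMeasurable.mul (hρ1m.sub hρ0m)
    apply Integrable.mono' (g := fun p : ℝ × (Fin d → ℝ) => (Cd + Cφ) * (|ρ0 p.2| + |ρ1 p.2|))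
      ?_ hmeas ?_
    · apply Integrable.const_mul
      have hdom := Integrable.mul_prod (μ := volume.restrict (Set.Ioc (0:ℝ) 1))
        (f := fun _ : ℝ => (1:ℝ)) (g := fun x => |ρ0 x| + |ρ1 x|)
        (integrable_const 1) (hρ0i.abs.add hρ1i.abs)
      simpa using hdom
    · have hmem : ∀ᵐ p ∂(((volume : Measure ℝ).prod volume).restrict
          (Set.Ioc (0:ℝ) 1 ×ˢ Ω)), p ∈ Set.Ioc (0:ℝ) 1 ×ˢ Ω :=
        ae_restrict_mem (measurableSet_Ioc.prod hΩm)
      rw [← Measure.prod_restrict] at hmem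
      filter_upwards [hmem] with p hp
      obtain ⟨hp1, -⟩ := hp
      have ht0 : (0:ℝ) ≤ p.1 := hp1.1.le
      have ht1 : p.1 ≤ 1 := hp1.2
      set a := ρ0 p.2
      set b := ρ1 p.2
      have hF : |a + p.1 * (b - a)| ≤ |a| + |b| := by
        rw [abs_le]
        constructor
        · nlinarith [le_abs_self a, neg_abs_le a, le_abs_self b, neg_abs_le b,
            abs_nonneg a, abs_nonneg b]
        · nlinarith [le_abs_self a, neg_abs_le a, le_abs_self b, neg_abs_le b,
            abs_nonneg a, abs_nonneg b]
      have hB : |b - a| ≤ |a| + |b| := by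
        calc |b - a| ≤ |b| + |a| := abs_sub _ _
          _ = |a| + |b| := add_comm _ _
      calc ‖fderiv ℝ φ p (1, 0) * (a + p.1 * (b - a)) + φ p * (b - a)‖
          ≤ ‖fderiv ℝ φ p (1, 0) * (a + p.1 * (b - a))‖ + ‖φ p * (b - a)‖ := norm_add_le _ _
        _ ≤ Cd * (|a| + |b|) + Cφ * (|a| + |b|) := by
            apply add_le_add
            · rw [norm_mul]
              exact mul_le_mul (hdirbd p _ hv10) hF (abs_nonneg _) hCd0
            · rw [norm_mul]
              exact mul_le_mul (hCφ p) hB (abs_nonneg _) hCφ0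
        _ = (Cd + Cφ) * (|a| + |b|) := by ring
  rw [hswap]
  have hinner : ∀ x : Fin d → ℝ, (∫ t in Set.Ioc (0:ℝ) 1,
      (fderiv ℝ φ (t, x) (1, 0) * (ρ0 x + t * (ρ1 x - ρ0 x)) + φ (t, x) * (ρ1 x - ρ0 x)))
      = 0 := by
    intro x
    rw [← intervalIntegral.integral_of_le zero_le_one]
    have hv0 : φ (0, x) = 0 := by
      apply image_eq_zero_of_notMem_tsupport
      intro h
      have := (hφs h).1
      simp at this
    have hv1 : φ (1, x) = 0 := by
      apply image_eq_zero_of_notMem_tsupport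
      intro h
      have := (hφs h).1
      simp at this
    have hcw : ∀ s : ℝ, HasDerivAt (fun s : ℝ => ρ0 x + s * (ρ1 x - ρ0 x)) (ρ1 x - ρ0 x) s := by
      intro s
      simpa using (((hasDerivAt_id s).mul_const (ρ1 x - ρ0 x)).const_add (ρ0 x))
    have hu'c : Continuous fun s : ℝ => fderiv ℝ φ (s, x) ((1:ℝ), (0 : Fin d → ℝ)) :=
      (ContinuousLinearMap.apply ℝ ℝ ((1:ℝ), (0:Fin d → ℝ))).continuous.comp
        (hfd.comp (continuous_id.prodMk continuous_const))
    have h := intervalIntegral.integral_deriv_mul_eq_sub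
      (u := fun s => φ (s, x)) (v := fun s => ρ0 x + s * (ρ1 x - ρ0 x))
      (u' := fun s => fderiv ℝ φ (s, x) (1, 0)) (v' := fun _ => ρ1 x - ρ0 x)
      (fun s _ => hDt s x) (fun s _ => hcw s)
      (hu'c.intervalIntegrable 0 1)
      (continuous_const.intervalIntegrable 0 1)
    simpa [hv0, hv1] using h
  simp_rw [hinner]
  simp
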